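/- arXiv:2207.09597 — 4 statements merged into one kernel-verified Lean document; each statement's English description precedes it below -/
import Mathlib

section
/- In the FARR-transformed game, every infeasible adversary pure strategy is strictly dominated by every feasible adversary pure strategy: for all θ' ∉ F, θ ∈ F, and all protagonist strategies π, the adversary's FARR utility satisfies U_a^λ(π, θ') < U_a^λ(π, θ). -/
open scoped Classical
noncomputable section

def IsMixed {A : Type*} [Fintype A] (s : A → ℝ) : Prop :=
  (∀ a, 0 ≤ s a) ∧ ∑ a, s a = 1

def expUtil {P T : Type*} [Fintype P] [Fintype T]
    (U : P → T → ℝ) (sp : P → ℝ) (st : T → ℝ) : ℝ :=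
  ∑ p, ∑ t, sp p * st t * U p t

def farrU {P T : Type*} (U : P → T → ℝ) (lam C : ℝ) : P → T → ℝ :=
  fun p t => if ∃ q, lam ≤ U q t then U p t else C

def IsNashZS {P T : Type*} [Fintype P] [Fintype T]
    (U : P → T → ℝ) (sp : P → ℝ) (st : T → ℝ) : Prop :=
  IsMixed sp ∧ IsMixed st ∧
  (∀ sp', IsMixed sp' → expUtil U sp' st ≤ expUtil U sp st) ∧
  (∀ st', IsMixed st' → expUtil U sp st ≤ expUtil U sp st')

/-- In the FARR-transformed game, every infeasible adversary pure strategy is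
strictly dominated by every feasible one: `U_a^λ(π, θ') < U_a^λ(π, θ)` where
`U_a^λ = -U_p^λ`. -/
theorem stmt1 {P T : Type*} [Fintype P] [Fintype T] [Nonempty P] [Nonempty T]
    (U : P → T → ℝ) (lam C : ℝ)
    (hC : ∀ p t, U p t < C)
    (hF : ∃ t, ∃ p, lam ≤ U p t)
    (θ' θ : T) (hinf : ¬ ∃ p, lam ≤ U p θ') (hfeas : ∃ p, lam ≤ U p θ)
    (π : P) :
    -(farrU U lam C π θ') < -(farrU U lam C π θ) := by
  simp only [farrU, if_neg hinf, if_pos hfeas]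
  have := hC π θ
  linarith
end
end

section
/- Let C > max_{π,θ} U_p(π,θ) and F be nonempty. Then every Nash equilibrium (σ_p, σ_θ) of the FARR-transformed game (with all adversary strategies Θ allowed and utility U_p^λ) is also a Nash equilibrium of the reduced zero-sum game with adversary strategies restricted to F and original utility U_p. -/
open scoped Classical
noncomputable section

/-- With `C > max U_p` and `F` nonempty, every Nash equilibrium of the
FARR-transformed game is also a Nash equilibrium of the reduced zero-sum game with
original utility `U_p` and adversary strategies restricted to the feasible set
(mixed strategies supported in `F`). -/
theorem stmt4 {P T : Type*} [Fintype P] [Fintype T] [Nonempty P] [Nonempty T]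
    (U : P → T → ℝ) (lam C : ℝ)
    (hC : ∀ p t, U p t < C)
    (hF : ∃ t, ∃ p, lam ≤ U p t)
    (σp : P → ℝ) (σθ : T → ℝ)
    (hNE : IsNashZS (farrU U lam C) σp σθ) :
    (∀ θ' : T, (¬ ∃ p, lam ≤ U p θ') → σθ θ' = 0) ∧
    (∀ σp', IsMixed σp' → expUtil U σp' σθ ≤ expUtil U σp σθ) ∧
    (∀ σθ', IsMixed σθ' → (∀ θ' : T, (¬ ∃ p, lam ≤ U p θ') → σθ' θ' = 0) →
      expUtil U σp σθ ≤ expUtil U σp σθ') := by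
  obtain ⟨hσp, hσθ, hP, hA⟩ := hNE
  set farr := farrU U lam C with hfarr
  set g : T → ℝ := fun t => ∑ p, σp p * farr p t with hg
  -- rewrite expUtil in terms of g
  have hswap : ∀ st : T → ℝ, expUtil farr σp st = ∑ t, st t * g t := by
    intro st
    rw [expUtil, Finset.sum_comm]
    refine Finset.sum_congr rfl fun t _ => ?_
    rw [hg, Finset.mul_sum]
    exact Finset.sum_congr rfl fun p _ => by ring
  -- pure strategies
  have hpure : ∀ t : T, IsMixed (fun t' => if t' = t then (1:ℝ) else 0) := by
    intro t
    refine ⟨fun a => by positivity, by simp⟩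
  have hdev : ∀ t : T, expUtil farr σp σθ ≤ g t := by
    intro t
    have h1 := hA _ (hpure t)
    rw [hswap (fun t' => if t' = t then (1:ℝ) else 0)] at h1
    simpa using h1
  -- exists a p with positive weight
  obtain ⟨p0, hp0⟩ : ∃ p, 0 < σp p := by
    by_contra h
    push_neg at h
    have hz : ∀ p, σp p = 0 := fun p => le_antisymm (h p) (hσp.1 p)
    have h1 := hσp.2
    rw [Finset.sum_congr rfl fun p _ => hz p] at h1
    simp at h1
  have hg_lt : ∀ t, (∃ q, lam ≤ U q t) → g t < C := by
    intro t ht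
    have hgt : g t = ∑ p, σp p * U p t := by
      refine Finset.sum_congr rfl fun p _ => ?_
      simp [hfarr, farrU, ht]
    rw [hgt]
    calc ∑ p, σp p * U p t < ∑ p, σp p * C := by
          refine Finset.sum_lt_sum (fun p _ => ?_) ⟨p0, Finset.mem_univ p0, ?_⟩
          · exact mul_le_mul_of_nonneg_left (hC p t).le (hσp.1 p)
          · exact (mul_lt_mul_iff_right₀ hp0).mpr (hC p0 t)
      _ = C := by rw [← Finset.sum_mul, hσp.2, one_mul]
  have hg_inf : ∀ t, ¬(∃ q, lam ≤ U q t) → g t = C := by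
    intro t ht
    have : ∀ p, farr p t = C := fun p => by simp [hfarr, farrU, ht]
    simp only [hg, this, ← Finset.sum_mul, hσp.2, one_mul]
  set v := expUtil farr σp σθ with hv
  have hvC : v < C := by
    obtain ⟨t0, ht0⟩ := hF
    exact lt_of_le_of_lt (hdev t0) (hg_lt t0 ht0)
  -- Part 1: support
  have hsupp : ∀ θ' : T, (¬ ∃ p, lam ≤ U p θ') → σθ θ' = 0 := by
    intro θ' hθ'
    by_contra hne
    have hpos : 0 < σθ θ' := lt_of_le_of_ne (hσθ.1 θ') (Ne.symm hne)
    have hveq : v = ∑ t, σθ t * g t := hswap σθ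
    have hlt : ∑ t, σθ t * v < ∑ t, σθ t * g t := by
      refine Finset.sum_lt_sum (fun t _ => ?_) ⟨θ', Finset.mem_univ θ', ?_⟩
      · exact mul_le_mul_of_nonneg_left (hdev t) (hσθ.1 t)
      · rw [hg_inf θ' hθ']
        exact (mul_lt_mul_iff_right₀ hpos).mpr hvC
    rw [← Finset.sum_mul, hσθ.2, one_mul, ← hveq] at hlt
    exact lt_irrefl v hlt
  -- expUtil on F-supported strategies agrees with farr
  have hEq : ∀ (sp : P → ℝ) (st : T → ℝ), (∀ t, (¬ ∃ p, lam ≤ U p t) → st t = 0) →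
      expUtil farr sp st = expUtil U sp st := by
    intro sp st hst
    refine Finset.sum_congr rfl fun p _ => Finset.sum_congr rfl fun t _ => ?_
    by_cases ht : ∃ q, lam ≤ U q t
    · simp [hfarr, farrU, ht]
    · simp [hst t ht]
  refine ⟨hsupp, fun sp' hsp' => ?_, fun σθ' hσθ' hsupp' => ?_⟩
  · have h1 := hP sp' hsp'
    rw [hEq sp' σθ hsupp] at h1
    exact le_of_le_of_eq h1 (hv.trans (hEq σp σθ hsupp))
  · have h1 := hA σθ' hσθ'
    calc expUtil U σp σθ = v := (hv.trans (hEq σp σθ hsupp)).symm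
      _ ≤ expUtil farr σp σθ' := h1
      _ = expUtil U σp σθ' := hEq σp σθ' hsupp'
end
end

section
/- In the FARR-transformed game with C > max U_p and nonempty F, the value of the zero-sum game min_{σ_θ} max_{σ_p} E[U_p^λ] equals the value of the restricted game min over distributions σ_θ supported on F of max_{σ_p} E[U_p], i.e., the FARR game value equals the feasibly-constrained robust RL value. -/
open scoped Classical
noncomputable section

set_option linter.unusedSectionVars false

section aux
variable {P T : Type*} [Fintype P] [Fintype T] [Nonempty P] [Nonempty T]

lemma sum_mul_mixed {sp : P → ℝ} {st : T → ℝ} (hsp : IsMixed sp) (hst : IsMixed st) (c : ℝ) :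
    ∑ p, ∑ t, sp p * st t * c = c := by
  simp_rw [mul_assoc, ← Finset.mul_sum, ← Finset.sum_mul, hsp.2, hst.2, one_mul]

lemma expUtil_le_of {V : P → T → ℝ} {M : ℝ} (hV : ∀ p t, V p t ≤ M)
    {sp : P → ℝ} {st : T → ℝ} (hsp : IsMixed sp) (hst : IsMixed st) :
    expUtil V sp st ≤ M := by
  rw [← sum_mul_mixed hsp hst M]
  refine Finset.sum_le_sum fun p _ => Finset.sum_le_sum fun t _ => ?_
  exact mul_le_mul_of_nonneg_left (hV p t) (mul_nonneg (hsp.1 p) (hst.1 t))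

lemma le_expUtil_of {V : P → T → ℝ} {B : ℝ} (hV : ∀ p t, B ≤ V p t)
    {sp : P → ℝ} {st : T → ℝ} (hsp : IsMixed sp) (hst : IsMixed st) :
    B ≤ expUtil V sp st := by
  rw [← sum_mul_mixed hsp hst B]
  refine Finset.sum_le_sum fun p _ => Finset.sum_le_sum fun t _ => ?_
  exact mul_le_mul_of_nonneg_left (hV p t) (mul_nonneg (hsp.1 p) (hst.1 t))

lemma isMixed_pure {A : Type*} [Fintype A] (a : A) :
    IsMixed (fun b => if b = a then (1:ℝ) else 0) := by
  constructor
  · intro b; by_cases h : b = a <;> simp [h]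
  · simp

end aux

/-- With `C > max U_p` and `F` nonempty, the value of the FARR-transformed
zero-sum game equals the value of the robust RL game restricted to mixed adversary
strategies supported on the feasible set `F`. -/
theorem stmt6 {P T : Type*} [Fintype P] [Fintype T] [Nonempty P] [Nonempty T]
    (U : P → T → ℝ) (lam C : ℝ)
    (hC : ∀ p t, U p t < C)
    (hF : ∃ t, ∃ p, lam ≤ U p t) :
    (⨅ σθ : {σ : T → ℝ // IsMixed σ}, ⨆ σp : {σ : P → ℝ // IsMixed σ},
      expUtil (farrU U lam C) σp.1 σθ.1)
    = ⨅ σθ : {σ : T → ℝ // IsMixed σ ∧ ∀ θ' : T, (¬ ∃ p, lam ≤ U p θ') → σ θ' = 0},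
        ⨆ σp : {σ : P → ℝ // IsMixed σ}, expUtil U σp.1 σθ.1 := by
  classical
  obtain ⟨t0, ht0⟩ := hF
  -- lower bound B for all utilities involved
  set B : ℝ := Finset.univ.inf' (Finset.univ_nonempty) (fun pt : P × T => U pt.1 pt.2) with hBdef
  have hBU : ∀ p t, B ≤ U p t := fun p t =>
    Finset.inf'_le _ (Finset.mem_univ (p, t))
  have hBC : B ≤ C := le_of_lt (lt_of_le_of_lt (hBU (Classical.arbitrary P) t0)
    (hC (Classical.arbitrary P) t0))
  have hUC : ∀ p t, U p t ≤ C := fun p t => (hC p t).le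
  have hBfarr : ∀ p t, B ≤ farrU U lam C p t := by
    intro p t; unfold farrU; split
    · exact hBU p t
    · exact hBC
  have hfarrC : ∀ p t, farrU U lam C p t ≤ C := by
    intro p t; unfold farrU; split
    · exact hUC p t
    · exact le_refl C
  haveI hne : Nonempty {σ : P → ℝ // IsMixed σ} :=
    ⟨⟨_, isMixed_pure (Classical.arbitrary P)⟩⟩
  -- boundedness of the inner sups
  have bddA : ∀ (V : P → T → ℝ), (∀ p t, V p t ≤ C) → ∀ st : T → ℝ, IsMixed st →
      BddAbove (Set.range fun σp : {σ : P → ℝ // IsMixed σ} => expUtil V σp.1 st) := by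
    intro V hV st hst
    exact ⟨C, by rintro x ⟨σp, rfl⟩; exact expUtil_le_of hV σp.2 hst⟩
  have supLB : ∀ (V : P → T → ℝ), (∀ p t, B ≤ V p t) → (∀ p t, V p t ≤ C) →
      ∀ st : T → ℝ, IsMixed st →
      B ≤ ⨆ σp : {σ : P → ℝ // IsMixed σ}, expUtil V σp.1 st := by
    intro V hVB hVC st hst
    refine le_trans (le_expUtil_of hVB (isMixed_pure (Classical.arbitrary P)) hst) ?_
    exact le_ciSup (bddA V hVC st hst) ⟨_, isMixed_pure (Classical.arbitrary P)⟩
  haveI : Nonempty {σ : T → ℝ // IsMixed σ} :=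
    ⟨⟨_, isMixed_pure (Classical.arbitrary T)⟩⟩
  haveI : Nonempty {σ : T → ℝ // IsMixed σ ∧ ∀ θ' : T, (¬ ∃ p, lam ≤ U p θ') → σ θ' = 0} := by
    refine ⟨⟨fun b => if b = t0 then 1 else 0, isMixed_pure t0, ?_⟩⟩
    intro θ' hn
    have : θ' ≠ t0 := fun h => hn (h ▸ ht0)
    simp [this]
  apply le_antisymm
  · -- LHS ≤ RHS
    refine le_ciInf fun σθ => ?_
    refine ciInf_le_of_le ⟨B, ?_⟩ ⟨σθ.1, σθ.2.1⟩ ?_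
    · rintro x ⟨σθ', rfl⟩; exact supLB _ hBfarr hfarrC σθ'.1 σθ'.2
    · have hpt : ∀ σp : {σ : P → ℝ // IsMixed σ},
          expUtil (farrU U lam C) σp.1 σθ.1 = expUtil U σp.1 σθ.1 := by
        intro σp
        refine Finset.sum_congr rfl fun p _ => Finset.sum_congr rfl fun t _ => ?_
        by_cases h : σθ.1 t = 0
        · simp [h]
        · have hfe : ∃ q, lam ≤ U q t := by
            by_contra hn; exact h (σθ.2.2 t hn)
          simp [farrU, hfe]
      exact (iSup_congr hpt).le
  · -- RHS ≤ LHS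
    refine le_ciInf fun σθ => ?_
    -- construct a feasibly-supported σθ' with pointwise domination
    obtain ⟨σθ', hmix', hsupp', hpt⟩ : ∃ σ' : T → ℝ, IsMixed σ' ∧
        (∀ θ' : T, (¬ ∃ p, lam ≤ U p θ') → σ' θ' = 0) ∧
        ∀ σp : {σ : P → ℝ // IsMixed σ},
          expUtil U σp.1 σ' ≤ expUtil (farrU U lam C) σp.1 σθ.1 := by
      set m : ℝ := ∑ t, if (∃ p, lam ≤ U p t) then σθ.1 t else 0 with hmdef
      have hm0 : 0 ≤ m := Finset.sum_nonneg fun t _ => by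
        split
        · exact σθ.2.1 t
        · exact le_refl 0
      have hm1 : m ≤ 1 := by
        rw [hmdef, ← σθ.2.2]
        refine Finset.sum_le_sum fun t _ => ?_
        split
        · exact le_refl _
        · exact σθ.2.1 t
      by_cases hmz : m = 0
      · -- the whole support of σθ is infeasible; FARR value is C
        have hsupp0 : ∀ t, (∃ p, lam ≤ U p t) → σθ.1 t = 0 := by
          intro t ht
          have hnn : ∀ u ∈ Finset.univ, (0:ℝ) ≤ if (∃ p, lam ≤ U p u) then σθ.1 u else 0 := by
            intro u _
            split
            · exact σθ.2.1 _
            · exact le_refl 0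
          have hz : (∑ u, if (∃ p, lam ≤ U p u) then σθ.1 u else 0) = 0 := by
            rw [← hmdef]; exact hmz
          have := (Finset.sum_eq_zero_iff_of_nonneg hnn).mp hz t (Finset.mem_univ t)
          simpa [ht] using this
        refine ⟨fun b => if b = t0 then 1 else 0, isMixed_pure t0, ?_, ?_⟩
        · intro θ' hn
          have : θ' ≠ t0 := fun h => hn (h ▸ ht0)
          simp [this]
        · intro σp
          have hCval : expUtil (farrU U lam C) σp.1 σθ.1 = C := by
            have : ∀ p t, σp.1 p * σθ.1 t * farrU U lam C p t = σp.1 p * σθ.1 t * C := by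
              intro p t
              by_cases hfe : ∃ q, lam ≤ U q t
              · simp [hsupp0 t hfe]
              · simp [farrU, hfe]
            calc expUtil (farrU U lam C) σp.1 σθ.1
                = ∑ p, ∑ t, σp.1 p * σθ.1 t * C :=
                  Finset.sum_congr rfl fun p _ => Finset.sum_congr rfl fun t _ => this p t
              _ = C := sum_mul_mixed σp.2 σθ.2 C
          rw [hCval]
          exact expUtil_le_of hUC σp.2 (isMixed_pure t0)
      · have hmpos : 0 < m := lt_of_le_of_ne hm0 (Ne.symm hmz)
        refine ⟨fun t => if (∃ p, lam ≤ U p t) then σθ.1 t / m else 0, ⟨?_, ?_⟩, ?_, ?_⟩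
        · intro t; dsimp only; split
          · exact div_nonneg (σθ.2.1 t) hm0
          · exact le_refl 0
        · have : ∀ t, (if (∃ p, lam ≤ U p t) then σθ.1 t / m else 0)
              = (if (∃ p, lam ≤ U p t) then σθ.1 t else 0) / m := by
            intro t; split
            · rfl
            · rw [zero_div]
          simp_rw [this, ← Finset.sum_div, ← hmdef]
          exact div_self hmz
        · intro θ' hn; simp [hn]
        · intro σp
          have hmix' : IsMixed (fun t => if (∃ p, lam ≤ U p t) then σθ.1 t / m else 0) := by
            constructor
            · intro t; dsimp only; split
              · exact div_nonneg (σθ.2.1 t) hm0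
              · exact le_refl 0
            · have : ∀ t, (if (∃ p, lam ≤ U p t) then σθ.1 t / m else 0)
                  = (if (∃ p, lam ≤ U p t) then σθ.1 t else 0) / m := by
                intro t; split
                · rfl
                · rw [zero_div]
              simp_rw [this, ← Finset.sum_div, ← hmdef]
              exact div_self hmz
          have hsum2 : ∑ t, (if (∃ p, lam ≤ U p t) then (0:ℝ) else σθ.1 t) = 1 - m := by
            have h1 : m + ∑ t, (if (∃ p, lam ≤ U p t) then (0:ℝ) else σθ.1 t) = 1 := by
              rw [hmdef, ← Finset.sum_add_distrib]
              rw [← σθ.2.2]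
              refine Finset.sum_congr rfl fun t _ => ?_
              split <;> ring
            linarith
          have key : expUtil (farrU U lam C) σp.1 σθ.1
              = m * expUtil U σp.1 (fun t => if (∃ p, lam ≤ U p t) then σθ.1 t / m else 0)
                + (1 - m) * C := by
            have hptw : ∀ p t, σp.1 p * σθ.1 t * farrU U lam C p t
                = m * (σp.1 p * (if (∃ q, lam ≤ U q t) then σθ.1 t / m else 0) * U p t)
                  + σp.1 p * (if (∃ q, lam ≤ U q t) then (0:ℝ) else σθ.1 t) * C := by
              intro p t
              by_cases hfe : ∃ q, lam ≤ U q t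
              · simp only [farrU, if_pos hfe]
                field_simp
                try ring
              · simp only [farrU, if_neg hfe]
                ring
            calc expUtil (farrU U lam C) σp.1 σθ.1
                = ∑ p, ∑ t, (m * (σp.1 p * (if (∃ q, lam ≤ U q t) then σθ.1 t / m else 0) * U p t)
                    + σp.1 p * (if (∃ q, lam ≤ U q t) then (0:ℝ) else σθ.1 t) * C) :=
                  Finset.sum_congr rfl fun p _ => Finset.sum_congr rfl fun t _ => hptw p t
              _ = m * expUtil U σp.1 (fun t => if (∃ p, lam ≤ U p t) then σθ.1 t / m else 0)
                    + (1 - m) * C := by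
                  simp_rw [Finset.sum_add_distrib, ← Finset.mul_sum]
                  congr 1
                  simp_rw [mul_assoc, ← Finset.mul_sum, ← Finset.sum_mul, hsum2, σp.2.2,
                    one_mul]
          rw [key]
          have hle : expUtil U σp.1 (fun t => if (∃ p, lam ≤ U p t) then σθ.1 t / m else 0) ≤ C :=
            expUtil_le_of hUC σp.2 hmix'
          nlinarith
    refine ciInf_le_of_le ⟨B, ?_⟩ ⟨σθ', hmix', hsupp'⟩ ?_
    · rintro x ⟨σ, rfl⟩; exact supLB U hBU hUC σ.1 σ.2.1
    · exact ciSup_mono (bddA _ hfarrC σθ.1 σθ.2) hpt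
end
end

section
/- If for all protagonist strategies π and all θ ∈ F we have U_p(π, θ) < C (in particular when C > max U_p), and the adversary's FARR-game Nash equilibrium mixed strategy σ_θ assigns positive probability to some infeasible θ', then σ_θ is not a best response: the adversary can strictly improve by moving all mass from θ' to any feasible θ. -/
open scoped Classical
noncomputable section

/-- If `U_p(π, θ) < C` for all `π` and all feasible `θ`, and the
adversary's mixed strategy `σθ` puts positive probability on some infeasible `θ'`,
then `σθ` is not a best response: moving all of the mass on `θ'` to any feasible `θ`
strictly decreases the protagonist's expected FARR utility. -/
theorem stmt12 {P T : Type*} [Fintype P] [Fintype T] [Nonempty P] [Nonempty T]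
    (U : P → T → ℝ) (lam C : ℝ)
    (hC : ∀ (p : P) (t : T), (∃ q, lam ≤ U q t) → U p t < C)
    (σp : P → ℝ) (σθ : T → ℝ)
    (hp : IsMixed σp) (ht : IsMixed σθ)
    (θ' : T) (hinf : ¬ ∃ p, lam ≤ U p θ') (hpos : 0 < σθ θ')
    (θ : T) (hfeas : ∃ p, lam ≤ U p θ) :
    expUtil (farrU U lam C) σp
        (fun t => if t = θ' then 0 else σθ t + if t = θ then σθ θ' else 0)
      < expUtil (farrU U lam C) σp σθ := by
  classical
  set F := farrU U lam C with hF
  set st' : T → ℝ := fun t => if t = θ' then 0 else σθ t + if t = θ then σθ θ' else 0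
    with hst'
  have hne : θ ≠ θ' := by
    intro h; exact hinf (h ▸ hfeas)
  have hFθ : ∀ p, F p θ = U p θ := fun p => if_pos hfeas
  have hFθ' : ∀ p, F p θ' = C := fun p => if_neg hinf
  have key : ∀ p, ∑ t, σp p * st' t * F p t
      = (∑ t, σp p * σθ t * F p t) + σθ θ' * (σp p * (F p θ - F p θ')) := by
    intro p
    have hterm : ∀ t, σp p * st' t * F p t
        = σp p * σθ t * F p t
          + ((if t = θ then σθ θ' * (σp p * F p θ) else 0)
             - (if t = θ' then σθ θ' * (σp p * F p θ') else 0)) := by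
      intro t
      by_cases h1 : t = θ'
      · subst h1
        simp [hst', hne.symm]
        ring
      · by_cases h2 : t = θ
        · subst h2
          simp [hst', h1]
          ring
        · simp [hst', h1, h2]
    rw [Finset.sum_congr rfl (fun t _ => hterm t)]
    rw [Finset.sum_add_distrib, Finset.sum_sub_distrib]
    simp [Finset.sum_ite_eq']
    ring
  have hsplit : expUtil F σp st'
      = expUtil F σp σθ + σθ θ' * ∑ p, σp p * (F p θ - F p θ') := by
    unfold expUtil
    rw [Finset.sum_congr rfl (fun p _ => key p), Finset.sum_add_distrib,
      ← Finset.mul_sum]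
  rw [hsplit]
  have hneg : σθ θ' * ∑ p, σp p * (F p θ - F p θ') < 0 := by
    apply mul_neg_of_pos_of_neg hpos
    have hex : ∃ p, 0 < σp p := by
      by_contra h
      push_neg at h
      have : (∑ p, σp p) ≤ 0 := Finset.sum_nonpos (fun p _ => h p)
      rw [hp.2] at this; linarith
    obtain ⟨p₀, hp₀⟩ := hex
    have : ∑ p, σp p * (F p θ - F p θ') < ∑ p : P, (0 : ℝ) := by
      apply Finset.sum_lt_sum
      · intro p _
        have : F p θ - F p θ' < 0 := by
          rw [hFθ, hFθ']; linarith [hC p θ hfeas]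
        exact mul_nonpos_of_nonneg_of_nonpos (hp.1 p) this.le
      · refine ⟨p₀, Finset.mem_univ _, ?_⟩
        have : F p₀ θ - F p₀ θ' < 0 := by
          rw [hFθ, hFθ']; linarith [hC p₀ θ hfeas]
        exact mul_neg_of_pos_of_neg hp₀ this
    simpa using this
  linarith
end
end
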